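/- Let N ≥ 1, d ≥ 1, H ≥ 0, let z_1, …, z_N : ℝ^d → ℝ be affine logits with Top-1 cells Ω_i := {x : z_i(x) ≥ z_j(x) ∀j}, and for each i ∈ {1, …, N} let A_i be a family of H affine hyperplanes in ℝ^d (the activation boundaries of expert i). Then the total number of linear regions of the Top-1 MoE layer satisfies ∑_{i=1}^{N} (number of connected components of interior(Ω_i) \ ⋃_{H'∈A_i} H') ≤ N · Φ(H, d), where Φ(H, d) = ∑_{j=0}^{d} binomial(H, j). -/

import Mathlib

/-- Zaslavsky's function `Φ(n, d) = ∑_{j=0}^{d} C(n, j)`. -/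
def Phi (n d : ℕ) : ℕ := ∑ j ∈ Finset.range (d + 1), Nat.choose n j

/-- The number of connected components of a subset (with the subspace topology). -/
noncomputable def numComponents {X : Type*} [TopologicalSpace X] (S : Set X) : ℕ :=
  Nat.card (ConnectedComponents ↥S)

/-- The Top-1 cell of expert `i` for affine logits `z`. -/
def topOneCell {N d : ℕ} (z : Fin N → ((Fin d → ℝ) →ᵃ[ℝ] ℝ)) (i : Fin N) :
    Set (Fin d → ℝ) :=
  {x | ∀ j : Fin N, z j x ≤ z i x}

lemma Phi_succ_right (n d : ℕ) : Phi n (d+1) = Phi n d + Nat.choose n (d+1) := by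
  simp [Phi, Finset.sum_range_succ]

lemma Phi_pascal (n d : ℕ) : Phi (n+1) (d+1) = Phi n (d+1) + Phi n d := by
  induction d with
  | zero => simp [Phi, Finset.sum_range_succ]; omega
  | succ d ih =>
      rw [Phi_succ_right, ih, Phi_succ_right n (d+1), Nat.choose_succ_succ,
        Phi_succ_right n d]
      simp only [Nat.succ_eq_add_one]
      omega

lemma Phi_mono (n d : ℕ) : Phi n d ≤ Phi (n+1) d :=
  Finset.sum_le_sum fun j _ => Nat.choose_le_choose j (Nat.le_succ n)

lemma Phi_pos (n d : ℕ) : 1 ≤ Phi n d := by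
  have : Nat.choose n 0 ≤ Phi n d :=
    Finset.single_le_sum (f := fun j => Nat.choose n j) (fun _ _ => Nat.zero_le _)
      (Finset.mem_range.2 (Nat.succ_pos d))
  simpa using this

/-- The sign condition. -/
def SignOk {V : Type*} [AddCommGroup V] [Module ℝ V] {H : ℕ}
    (g : Fin H → (V →ᵃ[ℝ] ℝ)) (σ : Fin H → Bool) (x : V) : Prop :=
  ∀ m, if σ m then 0 < g m x else g m x < 0

/-- The set of realizable sign vectors. -/
def RealSet {V : Type*} [AddCommGroup V] [Module ℝ V] {H : ℕ}
    (g : Fin H → (V →ᵃ[ℝ] ℝ)) : Set (Fin H → Bool) :=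
  {σ | ∃ x, SignOk g σ x}

set_option maxHeartbeats 1000000 in
lemma realSet_ncard_le (H : ℕ) :
    ∀ (d : ℕ) (V : Type) [AddCommGroup V] [Module ℝ V] [FiniteDimensional ℝ V],
      Module.finrank ℝ V ≤ d → ∀ g : Fin H → (V →ᵃ[ℝ] ℝ),
      (RealSet g).ncard ≤ Phi H d := by
  induction H with
  | zero =>
      intro d V _ _ _ _ g
      calc (RealSet g).ncard ≤ (Set.univ : Set (Fin 0 → Bool)).ncard :=
            Set.ncard_le_ncard (Set.subset_univ _) Set.finite_univ
        _ = 1 := by rw [Set.ncard_univ]; exact Nat.card_unique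
        _ ≤ Phi 0 d := Phi_pos 0 d
  | succ H ih =>
      intro d V _ _ _ hV g
      classical
      set glast := g (Fin.last H) with hglast
      have hmem : ∀ σ ∈ RealSet g, Fin.init σ ∈
          {τ : Fin H → Bool | ∃ x, SignOk g (Fin.snoc τ (σ (Fin.last H))) x} := by
        rintro σ ⟨x, hx⟩
        exact ⟨x, by rw [Fin.snoc_init_self]; exact hx⟩
      by_cases hL : glast.linear = 0
      · -- `glast` is constant
        have hconst : ∀ x y : V, glast x = glast y := by
          intro x y
          have h1 : glast ((x - y) +ᵥ y) = glast.linear (x - y) +ᵥ glast y :=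
            glast.map_vadd y (x - y)
          simpa [hL, vadd_eq_add, sub_add_cancel] using h1
        have hmaps : ∀ σ ∈ RealSet g,
            Fin.init σ ∈ RealSet (fun m : Fin H => g m.castSucc) := by
          rintro σ ⟨x, hx⟩
          exact ⟨x, fun m => hx m.castSucc⟩
        have hinj : Set.InjOn (fun σ : Fin (H+1) → Bool => Fin.init σ) (RealSet g) := by
          rintro σ ⟨x, hx⟩ τ ⟨y, hy⟩ h
          have hlast : σ (Fin.last H) = τ (Fin.last H) := by
            by_contra hne
            have hx' := hx (Fin.last H)
            have hy' := hy (Fin.last H)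
            have hxy := hconst x y
            rcases Bool.eq_false_or_eq_true (σ (Fin.last H)) with h1 | h1 <;>
              rcases Bool.eq_false_or_eq_true (τ (Fin.last H)) with h2 | h2 <;>
              simp [h1, h2] at hx' hy' hne <;> linarith
          calc σ = Fin.snoc (Fin.init σ) (σ (Fin.last H)) := (Fin.snoc_init_self σ).symm
            _ = Fin.snoc (Fin.init τ) (τ (Fin.last H)) := by
                rw [show Fin.init σ = Fin.init τ from h, hlast]
            _ = τ := Fin.snoc_init_self τ
        calc (RealSet g).ncard
            = ((fun σ : Fin (H+1) → Bool => Fin.init σ) '' RealSet g).ncard :=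
              (Set.ncard_image_of_injOn hinj).symm
          _ ≤ (RealSet (fun m : Fin H => g m.castSucc)).ncard :=
              Set.ncard_le_ncard (Set.image_subset_iff.2 hmaps) (Set.toFinite _)
          _ ≤ Phi H d := ih d V hV _
          _ ≤ Phi (H+1) d := Phi_mono H d
      · -- `glast` is non-constant
        obtain ⟨v, hv⟩ : ∃ v, glast.linear v ≠ 0 := by
          by_contra h
          push_neg at h
          exact hL (LinearMap.ext fun w => h w)
        have hVnt : Nontrivial V := ⟨v, 0, fun h => hv (by simp [h])⟩
        have hrk1 : 1 ≤ Module.finrank ℝ V := Module.finrank_pos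
        obtain ⟨d', rfl⟩ : ∃ d', d = d' + 1 := ⟨d - 1, by omega⟩
        set x0 : V := (-(glast 0) / glast.linear v) • v with hx0def
        have hx0 : glast x0 = 0 := by
          have h1 := glast.map_vadd 0 x0
          rw [vadd_eq_add, add_zero, vadd_eq_add] at h1
          rw [h1, hx0def, map_smul, smul_eq_mul]
          field_simp
          ring
        set W := LinearMap.ker glast.linear with hWdef
        have hWrank : Module.finrank ℝ W ≤ d' := by
          rw [hWdef]
          have hr := LinearMap.finrank_range_add_finrank_ker glast.linear
          have hrange : 0 < Module.finrank ℝ (LinearMap.range glast.linear) := by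
            rw [Module.finrank_pos_iff]
            exact ⟨⟨glast.linear v, LinearMap.mem_range_self _ v⟩, 0,
              fun h => hv (by simpa [Subtype.ext_iff] using h)⟩
          omega
        let e : W →ᵃ[ℝ] V := W.subtype.toAffineMap + AffineMap.const ℝ W x0
        have he : ∀ w : W, e w = (w : V) + x0 := fun w => rfl
        let g' : Fin H → (W →ᵃ[ℝ] ℝ) := fun m => (g m.castSucc).comp e
        have hseg : ∀ (q : V →ᵃ[ℝ] ℝ) (x y : V) (t : ℝ),
            q (x + t • (y - x)) = q x + t * (q y - q x) := by
          intro q x y t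
          have h2 : q.linear (y - x) = q y - q x := by
            have h3 := q.linearMap_vsub y x
            simpa [vsub_eq_sub] using h3
          have h1 := q.map_vadd x (t • (y - x))
          rw [vadd_eq_add, vadd_eq_add] at h1
          rw [add_comm x (t • (y - x)), h1, LinearMap.map_smul, h2, smul_eq_mul]
          ring
        set T : Bool → Set (Fin H → Bool) :=
          fun b => {τ | ∃ x, SignOk g (Fin.snoc τ b) x} with hTdef
        have hcross : T true ∩ T false ⊆ RealSet g' := by
          rintro τ ⟨⟨x, hx⟩, ⟨y, hy⟩⟩
          have ha : (0:ℝ) < glast x := by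
            have := hx (Fin.last H); rwa [Fin.snoc_last, if_pos rfl] at this
          have hb : glast y < 0 := by
            have := hy (Fin.last H); rwa [Fin.snoc_last, if_neg Bool.false_ne_true] at this
          set a := glast x with hadef
          set b := glast y with hbdef
          set t := a / (a - b) with htdef
          have hab : 0 < a - b := by linarith
          have ht0 : 0 < t := div_pos ha hab
          have ht1 : t < 1 := by rw [htdef, div_lt_one hab]; linarith
          set zpt := x + t • (y - x) with hz
          have hzlast : glast zpt = 0 := by
            rw [hz, hseg, ← hadef, ← hbdef, htdef]
            field_simp
            ring
          have hker : zpt - x0 ∈ W := by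
            rw [hWdef, LinearMap.mem_ker]
            have h2 := glast.linearMap_vsub zpt x0
            simp only [vsub_eq_sub] at h2
            rw [h2, hzlast, hx0, sub_zero]
          refine ⟨⟨zpt - x0, hker⟩, fun m => ?_⟩
          have hzm : g' m ⟨zpt - x0, hker⟩ = g m.castSucc zpt := by
            simp only [g', AffineMap.comp_apply, he]
            rw [sub_add_cancel]
          have hxm := hx m.castSucc
          have hym := hy m.castSucc
          rw [Fin.snoc_castSucc] at hxm hym
          rw [hzm, hz, hseg]
          rcases Bool.eq_false_or_eq_true (τ m) with h1 | h1
          · rw [h1] at hxm hym ⊢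
            rw [if_pos rfl] at hxm hym ⊢
            linarith [mul_pos ht0 hym, mul_pos (sub_pos.mpr ht1) hxm]
          · rw [h1] at hxm hym ⊢
            rw [if_neg Bool.false_ne_true] at hxm hym ⊢
            linarith [mul_pos ht0 (neg_pos.mpr hym), mul_pos (sub_pos.mpr ht1) (neg_pos.mpr hxm)]
        have hdel : T true ∪ T false ⊆ RealSet (fun m : Fin H => g m.castSucc) := by
          rintro τ (⟨x, hx⟩ | ⟨x, hx⟩) <;>
          · refine ⟨x, fun m => ?_⟩
            have := hx m.castSucc
            rwa [Fin.snoc_castSucc] at this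
        have hsplit : ∀ bv : Bool,
            ({σ ∈ RealSet g | σ (Fin.last H) = bv}).ncard ≤ (T bv).ncard := by
          intro bv
          have hinj : Set.InjOn (fun σ : Fin (H+1) → Bool => Fin.init σ)
              {σ ∈ RealSet g | σ (Fin.last H) = bv} := by
            rintro σ ⟨_, h1⟩ τ ⟨_, h2⟩ h
            calc σ = Fin.snoc (Fin.init σ) (σ (Fin.last H)) := (Fin.snoc_init_self σ).symm
              _ = Fin.snoc (Fin.init τ) (τ (Fin.last H)) := by
                  simp only [h1, h2]; rw [show Fin.init σ = Fin.init τ from h]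
              _ = τ := Fin.snoc_init_self τ
          rw [← Set.ncard_image_of_injOn hinj]
          apply Set.ncard_le_ncard _ (Set.toFinite _)
          rintro _ ⟨σ, ⟨hσ, hlast⟩, rfl⟩
          have := hmem σ hσ
          rw [hlast] at this
          exact this
        have hpart : (RealSet g).ncard =
            ({σ ∈ RealSet g | σ (Fin.last H) = true}).ncard +
            ({σ ∈ RealSet g | σ (Fin.last H) = false}).ncard := by
          rw [← Set.ncard_union_eq ?_ (Set.toFinite _) (Set.toFinite _)]
          · congr 1
            ext σ
            constructor
            · intro hσ
              rcases Bool.eq_false_or_eq_true (σ (Fin.last H)) with h1 | h1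
              · exact Or.inl ⟨hσ, h1⟩
              · exact Or.inr ⟨hσ, h1⟩
            · rintro (⟨h, _⟩ | ⟨h, _⟩) <;> exact h
          · rw [Set.disjoint_left]
            rintro σ ⟨_, h1⟩ ⟨_, h2⟩
            rw [h1] at h2
            exact Bool.noConfusion h2
        calc (RealSet g).ncard
            = ({σ ∈ RealSet g | σ (Fin.last H) = true}).ncard +
              ({σ ∈ RealSet g | σ (Fin.last H) = false}).ncard := hpart
          _ ≤ (T true).ncard + (T false).ncard := by
              exact Nat.add_le_add (hsplit true) (hsplit false)
          _ = (T true ∪ T false).ncard + (T true ∩ T false).ncard :=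
              (Set.ncard_union_add_ncard_inter _ _ (Set.toFinite _) (Set.toFinite _)).symm
          _ ≤ Phi H (d' + 1) + Phi H d' := by
              refine Nat.add_le_add ?_ ?_
              · exact le_trans (Set.ncard_le_ncard hdel (Set.toFinite _))
                  (ih (d' + 1) V hV _)
              · exact le_trans (Set.ncard_le_ncard hcross (Set.toFinite _))
                  (ih d' W hWrank g')
          _ = Phi (H+1) (d'+1) := (Phi_pascal H d').symm

set_option maxHeartbeats 1000000 in
lemma numComponents_diff_le {d H : ℕ} (U : Set (Fin d → ℝ)) (hUc : Convex ℝ U)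
    (f : Fin H → ((Fin d → ℝ) →ₗ[ℝ] ℝ)) (c : Fin H → ℝ) :
    numComponents (U \ ⋃ m : Fin H, {x : Fin d → ℝ | f m x = c m}) ≤ Phi H d := by
  classical
  set S : Set (Fin d → ℝ) := U \ ⋃ m : Fin H, {x | f m x = c m} with hSdef
  set g : Fin H → ((Fin d → ℝ) →ᵃ[ℝ] ℝ) :=
    fun m => (f m).toAffineMap - AffineMap.const ℝ (Fin d → ℝ) (c m) with hgdef
  have hgapp : ∀ m x, g m x = f m x - c m := fun m x => rfl
  have hne : ∀ (p : ↥S) m, f m p.1 ≠ c m := by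
    intro p m hEq
    exact p.2.2 (Set.mem_iUnion.2 ⟨m, hEq⟩)
  set sgn : ↥S → (Fin H → Bool) := fun p m => decide (c m < f m p.1) with hsgn
  have hsgn_true : ∀ (p : ↥S) m, sgn p m = true ↔ c m < f m p.1 := by
    intro p m; simp [hsgn]
  have hsgn_false : ∀ (p : ↥S) m, sgn p m = false ↔ f m p.1 < c m := by
    intro p m
    rcases (hne p m).lt_or_gt with h | h
    · simp [hsgn, h, not_lt.2 h.le]
    · simp [hsgn, h, lt_asymm h]
  have hsignok : ∀ p : ↥S, SignOk g (sgn p) p.1 := by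
    intro p m
    rcases Bool.eq_false_or_eq_true (sgn p m) with h | h <;> rw [h]
    · rw [if_pos rfl, hgapp]
      have := (hsgn_true p m).1 h
      linarith
    · rw [if_neg Bool.false_ne_true, hgapp]
      have := (hsgn_false p m).1 h
      linarith
  have hconst : ∀ p q : ↥S, (p : ConnectedComponents ↥S) = q → sgn p = sgn q := by
    intro p q hpq
    have hcc : connectedComponent p = connectedComponent q :=
      ConnectedComponents.coe_eq_coe.mp hpq
    have hq : q ∈ connectedComponent p := by
      rw [hcc]; exact mem_connectedComponent
    funext m
    have hcont : Continuous fun r : ↥S => f m r.1 :=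
      ((f m).continuous_of_finiteDimensional).comp continuous_subtype_val
    have huo : IsOpen {r : ↥S | c m < f m r.1} := isOpen_lt continuous_const hcont
    have hwo : IsOpen {r : ↥S | f m r.1 < c m} := isOpen_lt hcont continuous_const
    have hdisj : Disjoint {r : ↥S | c m < f m r.1} {r : ↥S | f m r.1 < c m} := by
      rw [Set.disjoint_left]
      intro r h1 h2
      have h1' : c m < f m r.1 := h1
      have h2' : f m r.1 < c m := h2
      exact lt_asymm h1' h2'
    have hcover : connectedComponent p ⊆
        {r : ↥S | c m < f m r.1} ∪ {r : ↥S | f m r.1 < c m} := by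
      intro r _
      rcases (hne r m).lt_or_gt with h | h
      · exact Or.inr h
      · exact Or.inl h
    rcases isPreconnected_connectedComponent.subset_or_subset huo hwo hdisj hcover
      with h | h
    · have h1 : c m < f m p.1 := h mem_connectedComponent
      have h2 : c m < f m q.1 := h hq
      rw [(hsgn_true p m).2 h1, (hsgn_true q m).2 h2]
    · have h1 : f m p.1 < c m := h mem_connectedComponent
      have h2 : f m q.1 < c m := h hq
      rw [(hsgn_false p m).2 h1, (hsgn_false q m).2 h2]
  have hinj2 : ∀ p q : ↥S, sgn p = sgn q →
      (p : ConnectedComponents ↥S) = (q : ConnectedComponents ↥S) := by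
    intro p q hpq
    set σ := sgn p with hσdef
    set P : Set (Fin d → ℝ) :=
      U ∩ ⋂ m, (if σ m then {x | c m < f m x} else {x | f m x < c m}) with hP
    have hPconv : Convex ℝ P := by
      refine hUc.inter (convex_iInter fun m => ?_)
      rcases Bool.eq_false_or_eq_true (σ m) with h | h <;> rw [h]
      · rw [if_pos rfl]
        exact (convex_Ioi (c m)).linear_preimage (f m)
      · rw [if_neg Bool.false_ne_true]
        exact (convex_Iio (c m)).linear_preimage (f m)
    have hmemP : ∀ r : ↥S, sgn r = σ → r.1 ∈ P := by
      intro r hr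
      refine ⟨r.2.1, Set.mem_iInter.2 fun m => ?_⟩
      rcases Bool.eq_false_or_eq_true (σ m) with h | h <;> rw [h]
      · rw [if_pos rfl]
        exact (hsgn_true r m).1 (by rw [hr, h])
      · rw [if_neg Bool.false_ne_true]
        exact (hsgn_false r m).1 (by rw [hr, h])
    have hPS : P ⊆ S := by
      rintro x ⟨hxU, hxI⟩
      refine ⟨hxU, fun hx => ?_⟩
      obtain ⟨m, hm⟩ := Set.mem_iUnion.1 hx
      have hmm : f m x = c m := hm
      have := Set.mem_iInter.1 hxI m
      rcases Bool.eq_false_or_eq_true (σ m) with h | h <;> rw [h] at this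
      · rw [if_pos rfl] at this
        have h3 : c m < f m x := this
        rw [hmm] at h3
        exact lt_irrefl _ h3
      · rw [if_neg Bool.false_ne_true] at this
        have h3 : f m x < c m := this
        rw [hmm] at h3
        exact lt_irrefl _ h3
    have hP' : IsPreconnected (Subtype.val ⁻¹' P : Set ↥S) := by
      rw [← Topology.IsInducing.subtypeVal.isPreconnected_image]
      rw [Set.image_preimage_eq_inter_range, Subtype.range_val,
        Set.inter_eq_self_of_subset_left hPS]
      exact hPconv.isPreconnected
    have hsub := hP'.subset_connectedComponent
      (show p ∈ (Subtype.val ⁻¹' P : Set ↥S) from hmemP p rfl)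
    have hq : q ∈ connectedComponent p := hsub (hmemP q hpq.symm)
    exact ConnectedComponents.coe_eq_coe.mpr (connectedComponent_eq hq)
  have hmain : Nat.card (ConnectedComponents ↥S) ≤ Nat.card ↥(RealSet g) := by
    have hlift : ∃ F : ConnectedComponents ↥S → ↥(RealSet g),
        ∀ p : ↥S, F (ConnectedComponents.mk p) = ⟨sgn p, p.1, hsignok p⟩ := by
      refine ⟨Quotient.lift (fun p : ↥S => (⟨sgn p, p.1, hsignok p⟩ : ↥(RealSet g)))
        ?_, fun p => rfl⟩
      intro p q hpq
      exact Subtype.ext (hconst p q (ConnectedComponents.coe_eq_coe.mpr hpq))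
    obtain ⟨F, hF⟩ := hlift
    have hFinj : Function.Injective F := by
      intro A B
      obtain ⟨p, rfl⟩ := ConnectedComponents.surjective_coe A
      obtain ⟨q, rfl⟩ := ConnectedComponents.surjective_coe B
      intro hAB
      rw [hF p, hF q] at hAB
      exact hinj2 p q (congrArg Subtype.val hAB)
    exact Nat.card_le_card_of_injective F hFinj
  calc numComponents S = Nat.card (ConnectedComponents ↥S) := rfl
    _ ≤ Nat.card ↥(RealSet g) := hmain
    _ = (RealSet g).ncard := Nat.card_coe_set_eq _
    _ ≤ Phi H d := realSet_ncard_le H d (Fin d → ℝ)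
        (le_of_eq (Module.finrank_fin_fun ℝ)) g


/-- for a Top-1 MoE layer with `N` experts, each expert `i` having a
family `A_i` of `H` affine activation hyperplanes `{x : f_{i,m}(x) = c_{i,m}}`, the
total number of linear regions, i.e. the sum over experts of the number of connected
components of `interior(Ω_i) \ ⋃ A_i`, is at most `N · Φ(H, d)`. -/
theorem top1_capacity_upper_bound {N d H : ℕ} (hN : 1 ≤ N) (hd : 1 ≤ d)
    (z : Fin N → ((Fin d → ℝ) →ᵃ[ℝ] ℝ))
    (f : Fin N → Fin H → ((Fin d → ℝ) →ₗ[ℝ] ℝ)) (c : Fin N → Fin H → ℝ)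
    (hf : ∀ i m, f i m ≠ 0) :
    ∑ i : Fin N,
        numComponents
          (interior (topOneCell z i) \ ⋃ m : Fin H, {x : Fin d → ℝ | f i m x = c i m})
      ≤ N * Phi H d := by
  have hbound : ∀ i : Fin N,
      numComponents
        (interior (topOneCell z i) \ ⋃ m : Fin H, {x : Fin d → ℝ | f i m x = c i m})
      ≤ Phi H d := by
    intro i
    apply numComponents_diff_le
    refine Convex.interior ?_
    have hcell : topOneCell z i = ⋂ j, (z j - z i) ⁻¹' Set.Iic 0 := by
      ext x
      simp [topOneCell, AffineMap.coe_sub, Pi.sub_apply, sub_nonpos]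
    rw [hcell]
    exact convex_iInter fun j => (convex_Iic 0).affine_preimage _
  calc ∑ i : Fin N,
        numComponents
          (interior (topOneCell z i) \ ⋃ m : Fin H, {x : Fin d → ℝ | f i m x = c i m})
      ≤ ∑ _i : Fin N, Phi H d := Finset.sum_le_sum fun i _ => hbound i
    _ = N * Phi H d := by simp [Finset.sum_const, Finset.card_univ, mul_comm]
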